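/- arXiv:2412.18005 — 7 statements merged into one kernel-verified Lean document; each statement's English description precedes it below -/
import Mathlib

section
/- Let n ≥ 1 and k ≥ 1. Let D ⊆ ℝⁿ be a convex set of affine dimension k (i.e., the vector span of D has dimension k), let C ⊆ D be a nonempty convex extreme subset of D (IsExtreme ℝ D C) of affine dimension k − 1, and let f : ℝⁿ → ℝ be an affine map that is constant with value c on C and nonconstant on D. Then either f(x) ≤ c for all x ∈ D, or f(x) ≥ c for all x ∈ D; and moreover {x ∈ D : f(x) = c} = C. -/
/-!
Since `f` is constant on `C` and not on `D`, the direction of `affineSpan C` lies in the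
hyperplane `vectorSpan D ⊓ ker f.linear` of `vectorSpan D`, and equals it by dimension count.
Hence every point of `D` on the level `f = c` lies in `affineSpan C`, and such a point is in `C`:
extending the segment from it through a relative interior point of `C` a little stays in `C`, and
extremality of `C` pulls the endpoint back into `C`. Finally, if `f` took values on both sides
of `c` on `D`, the open segment between two such points would meet the level set `C`, and
extremality would put both endpoints into `C`.
-/

open AffineMap Module Set

section VectorSpan

variable {k V P Q W : Type*} [Field k] [AddCommGroup V] [Module k V] [AddTorsor V P]
  [AddCommGroup W] [Module k W] [AddTorsor W Q]

theorem vectorSpan_le_ker_linear_of_forall_eq {s : Set P} {f : P →ᵃ[k] Q} {q : Q}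
    (hf : ∀ x ∈ s, f x = q) : vectorSpan k s ≤ LinearMap.ker f.linear := by
  rw [LinearMap.ker, ← Submodule.map_le_iff_le_comap, AffineMap.map_vectorSpan, le_bot_iff,
    vectorSpan_eq_bot_iff_subsingleton]
  exact subsingleton_singleton.anti (by rintro _ ⟨x, hx, rfl⟩; exact hf x hx)

theorem vectorSpan_eq_inf_ker_linear {C D : Set P} (hCD : C ⊆ D) {f : P →ᵃ[k] Q} {q : Q}
    (hfC : ∀ x ∈ C, f x = q) (hfD : ∃ x ∈ D, ∃ y ∈ D, f x ≠ f y)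
    (hdim : finrank k (vectorSpan k D) = finrank k (vectorSpan k C) + 1) :
    vectorSpan k C = vectorSpan k D ⊓ LinearMap.ker f.linear := by
  have : FiniteDimensional k (vectorSpan k D) := Module.finite_of_finrank_pos (by omega)
  obtain ⟨x, hx, y, hy, hxy⟩ := hfD
  have hlt : vectorSpan k D ⊓ LinearMap.ker f.linear < vectorSpan k D := by
    refine inf_lt_left.2 fun hle => hxy ?_
    have := hle (vsub_mem_vectorSpan k hx hy)
    rwa [LinearMap.mem_ker, linearMap_vsub, vsub_eq_zero_iff_eq] at this
  refine Submodule.eq_of_le_of_finrank_le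
    (le_inf (vectorSpan_mono k hCD) (vectorSpan_le_ker_linear_of_forall_eq hfC)) ?_
  have := Submodule.finrank_lt_finrank_of_lt hlt
  omega

theorem sep_apply_eq_subset_affineSpan {C D : Set P} (hCD : C ⊆ D) (hC : C.Nonempty)
    {f : P →ᵃ[k] Q} {q : Q} (hfC : ∀ x ∈ C, f x = q) (hfD : ∃ x ∈ D, ∃ y ∈ D, f x ≠ f y)
    (hdim : finrank k (vectorSpan k D) = finrank k (vectorSpan k C) + 1) :
    {x ∈ D | f x = q} ⊆ affineSpan k C := by
  obtain ⟨p, hp⟩ := hC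
  rintro x ⟨hxD, hfx⟩
  rw [SetLike.mem_coe, ← AffineSubspace.vsub_right_mem_direction_iff_mem (mem_affineSpan k hp),
    direction_affineSpan, vectorSpan_eq_inf_ker_linear hCD hfC hfD hdim]
  refine ⟨vsub_mem_vectorSpan k hxD (hCD hp), ?_⟩
  rw [SetLike.mem_coe, LinearMap.mem_ker, linearMap_vsub, hfx, hfC p hp, vsub_self]

end VectorSpan

theorem AffineMap.exists_mem_openSegment_apply_eq {𝕜 E : Type*} [Field 𝕜] [LinearOrder 𝕜]
    [IsStrictOrderedRing 𝕜] [AddCommGroup E] [Module 𝕜 E] (f : E →ᵃ[𝕜] 𝕜) {x y : E} {c : 𝕜}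
    (hx : c < f x) (hy : f y < c) : ∃ z ∈ openSegment 𝕜 x y, f z = c := by
  have hxy : 0 < f x - f y := by linarith
  refine ⟨lineMap x y ((f x - c) / (f x - f y)), ?_, ?_⟩
  · rw [openSegment_eq_image_lineMap]
    refine mem_image_of_mem _ ⟨div_pos (by linarith) hxy, (div_lt_one hxy).2 (by linarith)⟩
  · rw [apply_lineMap, lineMap_apply_ring']
    field_simp
    ring

theorem Convex.forall_le_or_forall_ge_of_isExtreme_sep {𝕜 E : Type*} [Field 𝕜]
    [LinearOrder 𝕜] [IsStrictOrderedRing 𝕜] [AddCommGroup E] [Module 𝕜 E] {D : Set E}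
    (hD : Convex 𝕜 D) {f : E →ᵃ[𝕜] 𝕜} {c : 𝕜} (hext : IsExtreme 𝕜 D {x ∈ D | f x = c}) :
    (∀ x ∈ D, f x ≤ c) ∨ ∀ x ∈ D, c ≤ f x := by
  by_contra! h
  obtain ⟨⟨x, hxD, hxc⟩, y, hyD, hyc⟩ := h
  obtain ⟨z, hz, hfz⟩ := f.exists_mem_openSegment_apply_eq hxc hyc
  exact hxc.ne' (hext.2 hxD hyD ⟨hD.openSegment_subset hxD hyD hz, hfz⟩ hz).2

theorem IsExtreme.mem_of_mem_affineSpan {E : Type*} [NormedAddCommGroup E] [NormedSpace ℝ E]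
    [FiniteDimensional ℝ E] {C D : Set E} (hext : IsExtreme ℝ D C) (hC : Convex ℝ C) {x : E}
    (hxD : x ∈ D) (hx : x ∈ affineSpan ℝ C) : x ∈ C := by
  obtain ⟨_, hp⟩ := ((affineSpan_nonempty ℝ).1 ⟨x, hx⟩).intrinsicInterior hC
  obtain ⟨q, hq, rfl⟩ := mem_intrinsicInterior.1 hp
  let g : ℝ → affineSpan ℝ C := fun t => ⟨lineMap x q t, AffineMap.lineMap_mem t hx q.2⟩
  have hg : Continuous g := lineMap_continuous.subtype_mk _
  have hg1 : g 1 = q := Subtype.ext (lineMap_apply_one x q)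
  obtain ⟨t, ht1, htC⟩ :=
    ((hg.tendsto 1).eventually (isOpen_interior.mem_nhds (hg1 ▸ hq))).exists_gt
  have hqseg : (q : E) ∈ openSegment ℝ x (lineMap x q t) := by
    rw [openSegment_eq_image_lineMap]
    refine ⟨t⁻¹, ⟨by positivity, inv_lt_one_of_one_lt₀ ht1⟩, ?_⟩
    simp only [lineMap_apply_module]
    match_scalars <;> field_simp
    ring
  exact hext.2 hxD (hext.1 (interior_subset (s := Subtype.val ⁻¹' C) htC)) (interior_subset (s := Subtype.val ⁻¹' C) hq) hqseg

theorem stmt1_general (n k : ℕ) (hk : 1 ≤ k)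
    (D : Set (Fin n → ℝ)) (hD : Convex ℝ D)
    (hDdim : Module.finrank ℝ (vectorSpan ℝ D) = k)
    (C : Set (Fin n → ℝ)) (hCne : C.Nonempty) (hC : Convex ℝ C)
    (hext : IsExtreme ℝ D C)
    (hCdim : Module.finrank ℝ (vectorSpan ℝ C) = k - 1)
    (f : (Fin n → ℝ) →ᵃ[ℝ] ℝ) (c : ℝ)
    (hfc : ∀ x ∈ C, f x = c)
    (hfD : ∃ x ∈ D, ∃ y ∈ D, f x ≠ f y) :
    ((∀ x ∈ D, f x ≤ c) ∨ (∀ x ∈ D, c ≤ f x)) ∧ {x ∈ D | f x = c} = C := by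
  have hlevel : {x ∈ D | f x = c} = C := by
    refine subset_antisymm (fun x hx => hext.mem_of_mem_affineSpan hC hx.1 ?_)
      fun x hx => ⟨hext.1 hx, hfc x hx⟩
    exact sep_apply_eq_subset_affineSpan hext.1 hCne hfc hfD (by omega) hx
  exact ⟨hD.forall_le_or_forall_ge_of_isExtreme_sep (hlevel ▸ hext), hlevel⟩

/-- If `C` is a `(k-1)`-dimensional face of a `k`-dimensional convex set `D`
and `f` is an affine map constant (with value `c`) on `C` and nonconstant on `D`, then
`f ≤ c` on `D` or `f ≥ c` on `D`, and equality holds exactly on `C`. -/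
theorem stmt1 (n k : ℕ) (hn : 1 ≤ n) (hk : 1 ≤ k)
    (D : Set (Fin n → ℝ)) (hD : Convex ℝ D)
    (hDdim : Module.finrank ℝ (vectorSpan ℝ D) = k)
    (C : Set (Fin n → ℝ)) (hCne : C.Nonempty) (hC : Convex ℝ C)
    (hext : IsExtreme ℝ D C)
    (hCdim : Module.finrank ℝ (vectorSpan ℝ C) = k - 1)
    (f : (Fin n → ℝ) →ᵃ[ℝ] ℝ) (c : ℝ)
    (hfc : ∀ x ∈ C, f x = c)
    (hfD : ∃ x ∈ D, ∃ y ∈ D, f x ≠ f y) :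
    ((∀ x ∈ D, f x ≤ c) ∨ (∀ x ∈ D, c ≤ f x)) ∧ {x ∈ D | f x = c} = C :=
  stmt1_general n k hk D hD hDdim C hCne hC hext hCdim f c hfc hfD
end

section
/- Let n ≥ 1. Let C ⊆ ℝⁿ be a convex set of affine dimension 2 and let f : ℝⁿ → ℝ be an affine map that is nonconstant on C. Let v₁ ≠ v₂ be points with f(v₁) = f(v₂) = c such that the closed segment e = [v₁, v₂] is an extreme subset of C (a 'flat edge'). Then for all w₁, w₂ ∈ C with w₁ ∉ e and w₂ ∉ e, one has f(w₁) ≠ c, f(w₂) ≠ c, and (f(w₁) − c)·(f(w₂) − c) > 0 (i.e., all points of C off the flat edge lie strictly on the same side of the level set of c). -/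
/-!
Since `f` is nonconstant on `C`, the vector span of the level set `C ∩ {f = c}` is a proper
subspace of the 2-dimensional vector span of `C`, so the level set is collinear. A point of `C`
collinear with the endpoints of the extreme segment `e` lies on `e`, hence `C ∩ {f = c} ⊆ e`.
If two points of `C \ e` lay on opposite sides of `{f = c}`, the open segment between them would
meet the level set, hence `e`, and extremality of `e` would force both endpoints into `e`.
-/

open Module Set

section LevelSet

variable {k V P : Type*} [Field k] [AddCommGroup V] [Module k V] [AddTorsor V P]

theorem vectorSpan_inter_preimage_singleton_lt {s : Set P} {f : P →ᵃ[k] k}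
    (hf : ∃ x ∈ s, ∃ y ∈ s, f x ≠ f y) (c : k) :
    vectorSpan k (s ∩ f ⁻¹' {c}) < vectorSpan k s := by
  obtain ⟨x, hx, y, hy, hxy⟩ := hf
  refine SetLike.lt_iff_le_and_exists.2
    ⟨vectorSpan_mono k inter_subset_left, x -ᵥ y, vsub_mem_vectorSpan k hx hy, fun hmem => ?_⟩
  have hker : vectorSpan k (s ∩ f ⁻¹' {c}) ≤ LinearMap.ker f.linear := by
    rw [vectorSpan_def, Submodule.span_le]
    rintro _ ⟨p, ⟨-, hp⟩, q, ⟨-, hq⟩, rfl⟩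
    simp_all [f.linearMap_vsub]
  have hfxy := hker hmem
  rw [LinearMap.mem_ker, f.linearMap_vsub, vsub_eq_sub, sub_eq_zero] at hfxy
  exact hxy hfxy

theorem collinear_inter_preimage_singleton {s : Set P} {f : P →ᵃ[k] k}
    (hs : finrank k (vectorSpan k s) = 2) (hf : ∃ x ∈ s, ∃ y ∈ s, f x ≠ f y) (c : k) :
    Collinear k (s ∩ f ⁻¹' {c}) := by
  have : FiniteDimensional k (vectorSpan k s) := Module.finite_of_finrank_eq_succ hs
  have hlt := vectorSpan_inter_preimage_singleton_lt hf c
  have : FiniteDimensional k (vectorSpan k (s ∩ f ⁻¹' {c})) :=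
    Submodule.finiteDimensional_of_le hlt.le
  rw [collinear_iff_finrank_le_one]
  have := Submodule.finrank_lt_finrank_of_lt hlt
  omega

end LevelSet

section Segment

variable {k E : Type*} [Field k] [LinearOrder k] [IsStrictOrderedRing k] [AddCommGroup E] [Module k E]

theorem mem_segment_of_isExtreme_of_collinear {s : Set E} {x y w : E}
    (hext : IsExtreme k s (segment k x y)) (hxy : x ≠ y) (hw : w ∈ s)
    (hcol : Collinear k {x, w, y}) : w ∈ segment k x y := by
  by_contra hwxy
  have hx : x ∈ s := hext.1 (left_mem_segment k x y)
  have hy : y ∈ s := hext.1 (right_mem_segment k x y)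
  have hwx : w ≠ x := fun h => hwxy (h ▸ left_mem_segment k x y)
  have hwy : w ≠ y := fun h => hwxy (h ▸ right_mem_segment k x y)
  rcases hcol.wbtw_or_wbtw_or_wbtw with h | h | h
  · exact hwxy (mem_segment_iff_wbtw.2 h)
  · exact hwxy (hext.2 hw hx (right_mem_segment k x y)
      (mem_openSegment_of_ne_left_right hwy hxy h.mem_segment))
  · exact hwxy (hext.2 hw hy (left_mem_segment k x y)
      (mem_openSegment_of_ne_left_right hwx hxy.symm h.symm.mem_segment))

theorem inter_preimage_singleton_subset_segment {s : Set E} {f : E →ᵃ[k] k} {x y : E} {c : k}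
    (hs : finrank k (vectorSpan k s) = 2) (hf : ∃ x ∈ s, ∃ y ∈ s, f x ≠ f y)
    (hext : IsExtreme k s (segment k x y)) (hxy : x ≠ y) (hfx : f x = c) (hfy : f y = c) :
    s ∩ f ⁻¹' {c} ⊆ segment k x y := by
  rintro w ⟨hw, hfw⟩
  refine mem_segment_of_isExtreme_of_collinear hext hxy hw
    ((collinear_inter_preimage_singleton hs hf c).subset ?_)
  rintro p (rfl | rfl | rfl)
  exacts [⟨hext.1 (left_mem_segment k _ _), hfx⟩, ⟨hw, hfw⟩, ⟨hext.1 (right_mem_segment k _ _), hfy⟩]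

theorem AffineMap.exists_mem_openSegment_apply_eq_s2 {f : E →ᵃ[k] k} {a b : E} {c : k}
    (ha : f a < c) (hb : c < f b) : ∃ z ∈ openSegment k a b, f z = c := by
  have hden : 0 < f b - f a := by linarith
  refine ⟨AffineMap.lineMap a b ((c - f a) / (f b - f a)), ?_, ?_⟩
  · rw [openSegment_eq_image_lineMap]
    exact ⟨_, ⟨div_pos (by linarith) hden, (div_lt_one hden).2 (by linarith)⟩, rfl⟩
  · rw [AffineMap.apply_lineMap, AffineMap.lineMap_apply_ring']
    field_simp
    ring

theorem mem_of_isExtreme_of_inter_preimage_subset {s t : Set E} {f : E →ᵃ[k] k} {a b : E}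
    {c : k} (hs : Convex k s) (ht : IsExtreme k s t) (hlevel : s ∩ f ⁻¹' {c} ⊆ t)
    (ha : a ∈ s) (hb : b ∈ s) (hfa : f a < c) (hfb : c < f b) : a ∈ t := by
  obtain ⟨z, hz, hfz⟩ := f.exists_mem_openSegment_apply_eq_s2 hfa hfb
  exact (ht.2 ha hb (hlevel ⟨hs.openSegment_subset ha hb hz, hfz⟩) hz)

theorem sub_mul_sub_pos_of_isExtreme {s t : Set E} {f : E →ᵃ[k] k} {a b : E}
    {c : k} (hs : Convex k s) (ht : IsExtreme k s t) (hlevel : s ∩ f ⁻¹' {c} ⊆ t)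
    (ha : a ∈ s \ t) (hb : b ∈ s \ t) : 0 < (f a - c) * (f b - c) := by
  have hfa : f a ≠ c := fun h => ha.2 (hlevel ⟨ha.1, h⟩)
  have hfb : f b ≠ c := fun h => hb.2 (hlevel ⟨hb.1, h⟩)
  rcases hfa.lt_or_gt with hfa | hfa <;> rcases hfb.lt_or_gt with hfb | hfb
  · exact mul_pos_of_neg_of_neg (by linarith) (by linarith)
  · exact absurd (mem_of_isExtreme_of_inter_preimage_subset hs ht hlevel ha.1 hb.1 hfa hfb) ha.2
  · exact absurd (mem_of_isExtreme_of_inter_preimage_subset hs ht hlevel hb.1 ha.1 hfb hfa) hb.2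
  · exact mul_pos (by linarith) (by linarith)

end Segment

theorem stmt2_general (n : ℕ)
    (C : Set (Fin n → ℝ)) (hC : Convex ℝ C)
    (hCdim : Module.finrank ℝ (vectorSpan ℝ C) = 2)
    (f : (Fin n → ℝ) →ᵃ[ℝ] ℝ)
    (hfC : ∃ x ∈ C, ∃ y ∈ C, f x ≠ f y)
    (v₁ v₂ : Fin n → ℝ) (hne : v₁ ≠ v₂) (c : ℝ)
    (h1 : f v₁ = c) (h2 : f v₂ = c)
    (hext : IsExtreme ℝ C (segment ℝ v₁ v₂)) :
    ∀ w₁ ∈ C, ∀ w₂ ∈ C, w₁ ∉ segment ℝ v₁ v₂ → w₂ ∉ segment ℝ v₁ v₂ →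
      f w₁ ≠ c ∧ f w₂ ≠ c ∧ 0 < (f w₁ - c) * (f w₂ - c) := by
  intro w₁ hw₁ w₂ hw₂ he₁ he₂
  have hlevel := inter_preimage_singleton_subset_segment hCdim hfC hext hne h1 h2
  exact ⟨fun h => he₁ (hlevel ⟨hw₁, h⟩), fun h => he₂ (hlevel ⟨hw₂, h⟩),
    sub_mul_sub_pos_of_isExtreme hC hext hlevel ⟨hw₁, he₁⟩ ⟨hw₂, he₂⟩⟩

/-- Flat-edge forcing. If the segment `[v₁, v₂]` is a flat edge (an extreme
subset on which the affine map `f` takes the constant value `c`) of a 2-dimensional convex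
set `C` on which `f` is nonconstant, then all points of `C` off the edge lie strictly on
the same side of the level set `f = c`. -/
theorem stmt2 (n : ℕ) (hn : 1 ≤ n)
    (C : Set (Fin n → ℝ)) (hC : Convex ℝ C)
    (hCdim : Module.finrank ℝ (vectorSpan ℝ C) = 2)
    (f : (Fin n → ℝ) →ᵃ[ℝ] ℝ)
    (hfC : ∃ x ∈ C, ∃ y ∈ C, f x ≠ f y)
    (v₁ v₂ : Fin n → ℝ) (hne : v₁ ≠ v₂) (c : ℝ)
    (h1 : f v₁ = c) (h2 : f v₂ = c)
    (hext : IsExtreme ℝ C (segment ℝ v₁ v₂)) :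
    ∀ w₁ ∈ C, ∀ w₂ ∈ C, w₁ ∉ segment ℝ v₁ v₂ → w₂ ∉ segment ℝ v₁ v₂ →
      f w₁ ≠ c ∧ f w₂ ≠ c ∧ 0 < (f w₁ - c) * (f w₂ - c) :=
  stmt2_general n C hC hCdim f hfC v₁ v₂ hne c h1 h2 hext
end

section
/- Let n ≥ 1. Let C ⊆ ℝⁿ be a convex set of affine dimension 2, and let f : ℝⁿ → ℝ be an affine map with linear part ℓ. Let v₁ ≠ v₂ be points and let d₁, d₂ ∈ ℝⁿ be nonzero vectors. Suppose: the closed segment e = [v₁, v₂] is an extreme subset of C; the rays e₁ = {v₁ + t·d₁ : t ≥ 0} and e₂ = {v₂ + t·d₂ : t ≥ 0} are extreme subsets of C; e ∩ e₁ = {v₁}; e ∩ e₂ = {v₂}; ℓ(d₁) < 0 (f decreases along e₁, i.e., e₁ is oriented towards v₁); and ℓ(d₂) > 0 (f increases along e₂, i.e., e₂ is oriented away from v₂). Then f(v₁) < f(v₂). -/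
/-!
Write `d₂ = α • (v₂ - v₁) + β • d₁`; this is possible because `C` spans a plane and `d₁` is not
parallel to the edge, as `e₁` meets `e` only at `v₁`. If `β < 0`, a suitable midpoint of a point
of `e₁` and a point of `e₂` lies on `e`, and extremality of `e` puts a point of `e₁ \ {v₁}` on `e`.
If `α < 0`, then `e₂` crosses `e₁` at a point other than `v₂`, and extremality of `e₁` puts `v₂`
on `e₁`. With `α, β ≥ 0`, the identity `ℓ d₂ = α (f v₂ - f v₁) + β ℓ d₁` and
`ℓ d₁ < 0 < ℓ d₂` force `f v₁ < f v₂`.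
-/

open Module

section

variable {E : Type*} [AddCommGroup E] [Module ℝ E]

def halfLine (v d : E) : Set E := {x | ∃ t : ℝ, 0 ≤ t ∧ x = v + t • d}

theorem add_smul_mem_halfLine (v d : E) {t : ℝ} (ht : 0 ≤ t) : v + t • d ∈ halfLine v d :=
  ⟨t, ht, rfl⟩

theorem self_mem_halfLine (v d : E) : v ∈ halfLine v d :=
  ⟨0, le_rfl, by simp⟩

theorem add_mem_halfLine (v d : E) : v + d ∈ halfLine v d :=
  ⟨1, zero_le_one, by simp⟩

theorem mem_vectorSpan_of_halfLine_subset {C : Set E} {v d : E} (h : halfLine v d ⊆ C) :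
    d ∈ vectorSpan ℝ C := by
  simpa using vsub_mem_vectorSpan ℝ (h (add_mem_halfLine v d)) (h (self_mem_halfLine v d))

theorem add_smul_sub_mem_segment (v₁ v₂ : E) {μ : ℝ} (h₀ : 0 ≤ μ) (h₁ : μ ≤ 1) :
    v₁ + μ • (v₂ - v₁) ∈ segment ℝ v₁ v₂ := by
  rw [segment_eq_image']
  exact ⟨μ, ⟨h₀, h₁⟩, rfl⟩

theorem Submodule.exists_smul_add_smul_eq_of_finrank_eq_two {K V : Type*} [Field K]
    [AddCommGroup V] [Module K V] {S : Submodule K V} (hS : finrank K S = 2) {x y u : V}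
    (hx : x ∈ S) (hy : y ∈ S) (hxy : LinearIndependent K ![x, y]) (hu : u ∈ S) :
    ∃ a b : K, a • x + b • y = u := by
  have : FiniteDimensional K S := .of_finrank_pos (by omega)
  have hle : span K {x, y} ≤ S := by
    rw [span_le]
    rintro z (rfl | rfl) <;> assumption
  have hrank : finrank K (span K {x, y}) = 2 := by
    rw [← Matrix.range_cons_cons_empty, finrank_span_eq_card hxy, Fintype.card_fin]
  rw [← mem_span_pair, eq_of_le_of_finrank_eq hle (hrank.trans hS.symm)]
  exact hu

variable {C : Set E} {v₁ v₂ d₁ d₂ : E}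

theorem linearIndependent_edge_halfLine_of_isExtreme_segment
    (he : IsExtreme ℝ C (segment ℝ v₁ v₂)) (hne : v₁ ≠ v₂) (hd₁ : d₁ ≠ 0) (hC : v₁ + d₁ ∈ C)
    (hcap : segment ℝ v₁ v₂ ∩ halfLine v₁ d₁ = {v₁}) :
    LinearIndependent ℝ ![v₂ - v₁, d₁] := by
  rw [LinearIndependent.pair_iff' (sub_ne_zero.mpr hne.symm)]
  rintro a rfl
  have ha₀ : a ≠ 0 := by rintro rfl; exact hd₁ (zero_smul ℝ _)
  rcases ha₀.lt_or_gt with ha | ha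
  · have hv₁ : v₁ ∈ openSegment ℝ (v₁ + a • (v₂ - v₁)) v₂ := by
      have : 0 < 1 - a := by linarith
      refine ⟨(1 - a)⁻¹, -a / (1 - a), by positivity, div_pos (by linarith) this,
        by field_simp; ring, ?_⟩
      match_scalars <;> field_simp <;> ring
    have hseg := he.left_mem_of_mem_openSegment hC (he.subset (right_mem_segment ℝ v₁ v₂))
      (left_mem_segment ℝ v₁ v₂) hv₁
    have : v₁ + a • (v₂ - v₁) ∈ ({v₁} : Set E) := hcap ▸ ⟨hseg, add_mem_halfLine _ _⟩
    exact hd₁ (by simpa using this)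
  · have : v₂ ∈ segment ℝ v₁ v₂ ∩ halfLine v₁ (a • (v₂ - v₁)) := by
      refine ⟨right_mem_segment ℝ v₁ v₂, a⁻¹, inv_nonneg.mpr ha.le, ?_⟩
      rw [smul_smul, inv_mul_cancel₀ ha.ne', one_smul, add_sub_cancel]
    rw [hcap] at this
    exact hne this.symm

theorem ray_coeff_nonneg_of_isExtreme_segment (he : IsExtreme ℝ C (segment ℝ v₁ v₂))
    (hd₁ : d₁ ≠ 0) (h₁ : halfLine v₁ d₁ ⊆ C) (h₂ : halfLine v₂ d₂ ⊆ C)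
    (hcap : segment ℝ v₁ v₂ ∩ halfLine v₁ d₁ = {v₁}) {α β : ℝ}
    (hd₂ : α • (v₂ - v₁) + β • d₁ = d₂) : 0 ≤ β := by
  by_contra! hβ
  set t : ℝ := (|α| + 1)⁻¹
  have ht : 0 < t := by positivity
  have htα : |t * α| ≤ 1 := by
    rw [abs_mul, abs_of_pos ht]
    calc t * |α| ≤ t * (|α| + 1) := by gcongr; linarith
      _ = 1 := inv_mul_cancel₀ (by positivity)
  have hmid : v₁ + ((1 + t * α) / 2) • (v₂ - v₁) ∈
      openSegment ℝ (v₁ + (-(t * β)) • d₁) (v₂ + t • d₂) := by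
    refine ⟨1/2, 1/2, by norm_num, by norm_num, by norm_num, ?_⟩
    rw [← hd₂]
    match_scalars <;> ring
  have hseg := add_smul_sub_mem_segment v₁ v₂ (μ := (1 + t * α) / 2)
    (by linarith [neg_abs_le (t * α)]) (by linarith [le_abs_self (t * α)])
  have hmem := he.left_mem_of_mem_openSegment
    (h₁ (add_smul_mem_halfLine _ _ (by nlinarith))) (h₂ (add_smul_mem_halfLine _ _ ht.le)) hseg hmid
  have : v₁ + (-(t * β)) • d₁ ∈ ({v₁} : Set E) :=
    hcap ▸ ⟨hmem, add_smul_mem_halfLine _ _ (by nlinarith)⟩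
  simp [hd₁, ht.ne', hβ.ne] at this

theorem edge_coeff_nonneg_of_isExtreme_halfLine (he₁ : IsExtreme ℝ C (halfLine v₁ d₁))
    (h₂ : halfLine v₂ d₂ ⊆ C) (hne : v₁ ≠ v₂)
    (hcap : segment ℝ v₁ v₂ ∩ halfLine v₁ d₁ = {v₁}) {α β : ℝ} (hβ : 0 ≤ β)
    (hd₂ : α • (v₂ - v₁) + β • d₁ = d₂) : 0 ≤ α := by
  by_contra! hα
  obtain ⟨t, ht, htα⟩ : ∃ t : ℝ, 0 < t ∧ t * α = -1 :=
    ⟨-α⁻¹, by simpa using hα, by rw [neg_mul, inv_mul_cancel₀ hα.ne]⟩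
  have hcross : v₂ + t • d₂ ∈ halfLine v₁ d₁ := by
    refine ⟨t * β, by positivity, ?_⟩
    rw [← hd₂]
    match_scalars <;> linarith
  have hmid : v₂ + t • d₂ ∈ openSegment ℝ v₂ (v₂ + (2 * t) • d₂) := by
    refine ⟨1/2, 1/2, by norm_num, by norm_num, by norm_num, ?_⟩
    match_scalars <;> ring
  have hv₂ := he₁.left_mem_of_mem_openSegment (h₂ (self_mem_halfLine _ _))
    (h₂ (add_smul_mem_halfLine _ _ (by positivity))) hcross hmid
  have : v₂ ∈ ({v₁} : Set E) := hcap ▸ ⟨right_mem_segment ℝ v₁ v₂, hv₂⟩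
  exact hne this.symm

end

theorem stmt3_general (n : ℕ)
    (C : Set (Fin n → ℝ))
    (hCdim : Module.finrank ℝ (vectorSpan ℝ C) = 2)
    (f : (Fin n → ℝ) →ᵃ[ℝ] ℝ)
    (v₁ v₂ : Fin n → ℝ) (hne : v₁ ≠ v₂)
    (d₁ d₂ : Fin n → ℝ) (hd₁ : d₁ ≠ 0)
    (he : IsExtreme ℝ C (segment ℝ v₁ v₂))
    (he₁ : IsExtreme ℝ C {x | ∃ t : ℝ, 0 ≤ t ∧ x = v₁ + t • d₁})
    (he₂ : IsExtreme ℝ C {x | ∃ t : ℝ, 0 ≤ t ∧ x = v₂ + t • d₂})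
    (hcap₁ : segment ℝ v₁ v₂ ∩ {x | ∃ t : ℝ, 0 ≤ t ∧ x = v₁ + t • d₁} = {v₁})
    (hl₁ : f.linear d₁ < 0) (hl₂ : 0 < f.linear d₂) :
    f v₁ < f v₂ := by
  have h₁ : halfLine v₁ d₁ ⊆ C := he₁.subset
  have h₂ : halfLine v₂ d₂ ⊆ C := he₂.subset
  have hind := linearIndependent_edge_halfLine_of_isExtreme_segment he hne hd₁
    (h₁ (add_mem_halfLine v₁ d₁)) hcap₁
  obtain ⟨α, β, hd₂⟩ := Submodule.exists_smul_add_smul_eq_of_finrank_eq_two hCdim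
    (vsub_mem_vectorSpan ℝ (he.subset (right_mem_segment ℝ v₁ v₂))
      (he.subset (left_mem_segment ℝ v₁ v₂)))
    (mem_vectorSpan_of_halfLine_subset h₁) hind (mem_vectorSpan_of_halfLine_subset h₂)
  have hβ := ray_coeff_nonneg_of_isExtreme_segment he hd₁ h₁ h₂ hcap₁ hd₂
  have hα := edge_coeff_nonneg_of_isExtreme_halfLine he₁ h₂ hne hcap₁ hβ hd₂
  have hℓ : f.linear d₂ = α * (f v₂ - f v₁) + β * f.linear d₁ := by
    rw [← hd₂, map_add, map_smul, map_smul, f.linearMap_vsub, smul_eq_mul, smul_eq_mul,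
      vsub_eq_sub]
  nlinarith

/-- No-zigzags lemma. Let `C` be a 2-dimensional convex set, `e = [v₁, v₂]`
an extreme segment, and `e₁`, `e₂` extreme rays emanating from `v₁`, `v₂` in directions
`d₁`, `d₂`, meeting `e` only at `v₁`, `v₂` respectively. If the affine map `f` decreases
along `e₁` and increases along `e₂`, then `f v₁ < f v₂`. -/
theorem stmt3 (n : ℕ) (hn : 1 ≤ n)
    (C : Set (Fin n → ℝ)) (hC : Convex ℝ C)
    (hCdim : Module.finrank ℝ (vectorSpan ℝ C) = 2)
    (f : (Fin n → ℝ) →ᵃ[ℝ] ℝ)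
    (v₁ v₂ : Fin n → ℝ) (hne : v₁ ≠ v₂)
    (d₁ d₂ : Fin n → ℝ) (hd₁ : d₁ ≠ 0) (hd₂ : d₂ ≠ 0)
    (he : IsExtreme ℝ C (segment ℝ v₁ v₂))
    (he₁ : IsExtreme ℝ C {x | ∃ t : ℝ, 0 ≤ t ∧ x = v₁ + t • d₁})
    (he₂ : IsExtreme ℝ C {x | ∃ t : ℝ, 0 ≤ t ∧ x = v₂ + t • d₂})
    (hcap₁ : segment ℝ v₁ v₂ ∩ {x | ∃ t : ℝ, 0 ≤ t ∧ x = v₁ + t • d₁} = {v₁})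
    (hcap₂ : segment ℝ v₁ v₂ ∩ {x | ∃ t : ℝ, 0 ≤ t ∧ x = v₂ + t • d₂} = {v₂})
    (hl₁ : f.linear d₁ < 0) (hl₂ : 0 < f.linear d₂) :
    f v₁ < f v₂ :=
  stmt3_general n C hCdim f v₁ v₂ hne d₁ d₂ hd₁ he he₁ he₂ hcap₁ hl₁ hl₂
end

section
/- Let α be a type with decidable equality, let K be a finite family of finite subsets (Finsets) of α, and let u ∈ α be such that for every σ ∈ K: σ ∪ {u} ∈ K, and if u ∈ σ then σ \ {u} ∈ K (K is a cone with apex u). Define V = {(σ, σ ∪ {u}) : σ ∈ K, u ∉ σ}. Then V is a discrete vector field on K in which every element of K belongs to exactly one pair, and V is acyclic. -/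
/-- A discrete vector field on a family `X` of finite sets: a set of pairs `(C, D)` with
`C, D ∈ X`, `C ⊆ D`, `|D| = |C| + 1`, such that every element of `X` belongs to at most
one pair. -/
def IsDVF {α : Type*} (X : Set (Finset α)) (V : Set (Finset α × Finset α)) : Prop :=
  (∀ p ∈ V, p.1 ∈ X ∧ p.2 ∈ X ∧ p.1 ⊆ p.2 ∧ p.2.card = p.1.card + 1) ∧
  ∀ p ∈ V, ∀ q ∈ V, ∀ σ : Finset α,
    (σ = p.1 ∨ σ = p.2) → (σ = q.1 ∨ σ = q.2) → p = q

/-- A `V`-path: a sequence of pairs `(C₀, D₀), …, (C_r, D_r)` of `V` such that for each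
`i < r`: `C_{i+1} ⊆ D_i`, `|C_{i+1}| = |D_i| − 1` and `C_{i+1} ≠ C_i`. -/
def IsVPath {α : Type*} (V : Set (Finset α × Finset α)) (r : ℕ)
    (p : ℕ → Finset α × Finset α) : Prop :=
  (∀ i ≤ r, p i ∈ V) ∧
  ∀ i < r, (p (i+1)).1 ⊆ (p i).2 ∧ (p (i+1)).1.card + 1 = (p i).2.card ∧
    (p (i+1)).1 ≠ (p i).1

/-- `V` is acyclic if there is no non-trivial closed `V`-path. -/
def IsAcyclicDVF {α : Type*} (V : Set (Finset α × Finset α)) : Prop :=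
  ¬ ∃ (r : ℕ) (p : ℕ → Finset α × Finset α), 1 ≤ r ∧ IsVPath V r p ∧
    (p 0).1 ⊆ (p r).2 ∧ (p 0).1.card + 1 = (p r).2.card ∧ (p 0).1 ≠ (p r).1

/-! Every cell `σ` of the cone lies in exactly one pair, namely `(σ.erase u, insert u σ)`. A `V`-path
cannot take a single step: from `(σ, insert u σ)` the next lower cell is a codimension-one face of
`insert u σ` avoiding `u`, and the only such face is `σ` itself. -/

namespace Finset

variable {α : Type*} [DecidableEq α]

theorem insert_erase_eq_insert (σ : Finset α) (u : α) : insert u (σ.erase u) = insert u σ := by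
  by_cases hu : u ∈ σ
  · rw [insert_erase hu, insert_eq_of_mem hu]
  · rw [erase_eq_of_notMem hu]

theorem eq_erase_or_eq_insert (σ : Finset α) (u : α) : σ = σ.erase u ∨ σ = insert u σ := by
  by_cases hu : u ∈ σ
  · exact Or.inr (insert_eq_of_mem hu).symm
  · exact Or.inl (erase_eq_of_notMem hu).symm

end Finset

open Finset

section ConePairs

variable {α : Type*} [DecidableEq α]

def conePairs (K : Finset (Finset α)) (u : α) : Set (Finset α × Finset α) :=
  {p | ∃ σ ∈ K, u ∉ σ ∧ p = (σ, insert u σ)}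

variable {K : Finset (Finset α)} {u : α}

theorem eq_of_mem_conePairs_of_incident {p : Finset α × Finset α} {σ : Finset α}
    (hp : p ∈ conePairs K u) (hσ : σ = p.1 ∨ σ = p.2) : p = (σ.erase u, insert u σ) := by
  obtain ⟨τ, -, hu, rfl⟩ := hp
  rcases hσ with rfl | rfl
  · rw [erase_eq_of_notMem hu]
  · rw [erase_insert hu, insert_idem]

theorem erase_insert_mem_conePairs {σ : Finset α} (hσ : σ ∈ K) (herase : u ∈ σ → σ.erase u ∈ K) :
    (σ.erase u, insert u σ) ∈ conePairs K u := by
  refine ⟨σ.erase u, ?_, notMem_erase u σ, by rw [insert_erase_eq_insert]⟩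
  by_cases hu : u ∈ σ
  · exact herase hu
  · rwa [erase_eq_of_notMem hu]

theorem isDVF_conePairs (hinsert : ∀ σ ∈ K, insert u σ ∈ K) : IsDVF (↑K) (conePairs K u) := by
  refine ⟨?_, fun p hp q hq σ hσp hσq => ?_⟩
  · rintro p ⟨σ, hσ, hu, rfl⟩
    exact ⟨hσ, hinsert σ hσ, subset_insert u σ, card_insert_of_notMem hu⟩
  · rw [eq_of_mem_conePairs_of_incident hp hσp, eq_of_mem_conePairs_of_incident hq hσq]

theorem existsUnique_incident_conePairs {σ : Finset α} (hσ : σ ∈ K)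
    (herase : u ∈ σ → σ.erase u ∈ K) :
    ∃! p, p ∈ conePairs K u ∧ (σ = p.1 ∨ σ = p.2) :=
  ⟨(σ.erase u, insert u σ), ⟨erase_insert_mem_conePairs hσ herase, eq_erase_or_eq_insert σ u⟩,
    fun _ ⟨hp, hσp⟩ => eq_of_mem_conePairs_of_incident hp hσp⟩

theorem eq_of_step_conePairs {p q : Finset α × Finset α} (hp : p ∈ conePairs K u)
    (hq : q ∈ conePairs K u) (hsub : q.1 ⊆ p.2) (hcard : q.1.card + 1 = p.2.card) :
    q.1 = p.1 := by
  obtain ⟨σ, -, hσ, rfl⟩ := hp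
  obtain ⟨τ, -, hτ, rfl⟩ := hq
  rw [card_insert_of_notMem hσ, Nat.add_right_cancel_iff] at hcard
  exact eq_of_subset_of_card_le ((subset_insert_iff_of_notMem hτ).mp hsub) hcard.ge

theorem isAcyclicDVF_conePairs : IsAcyclicDVF (conePairs K u) := by
  rintro ⟨r, p, hr, ⟨hmem, hstep⟩, -⟩
  obtain ⟨hsub, hcard, hne⟩ := hstep 0 hr
  exact hne (eq_of_step_conePairs (hmem 0 r.zero_le) (hmem 1 hr) hsub hcard)

end ConePairs

/-- If `K` is a cone with apex `u`, then pairing each cell `σ` not containing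
`u` with `σ ∪ {u}` yields a complete acyclic discrete vector field on `K`. -/
theorem stmt6 {α : Type*} [DecidableEq α] (K : Finset (Finset α)) (u : α)
    (hcone : ∀ σ ∈ K, insert u σ ∈ K ∧ (u ∈ σ → σ.erase u ∈ K))
    (V : Set (Finset α × Finset α))
    (hV : V = {p | ∃ σ ∈ K, u ∉ σ ∧ p = (σ, insert u σ)}) :
    IsDVF (↑K) V ∧ (∀ σ ∈ K, ∃! p, p ∈ V ∧ (σ = p.1 ∨ σ = p.2)) ∧ IsAcyclicDVF V := by
  change V = conePairs K u at hV
  subst hV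
  exact ⟨isDVF_conePairs fun σ hσ => (hcone σ hσ).1,
    fun σ hσ => existsUnique_incident_conePairs hσ (hcone σ hσ).2, isAcyclicDVF_conePairs⟩
end

section
/- Let k ≥ 1 and let v, a₁, …, a_k, b₁, …, b_k be 2k + 1 distinct elements of a type α with decidable equality. Let P be the family of all finite subsets F of {v, a₁, …, a_k, b₁, …, b_k} such that v ∈ F and, for each i, not both a_i ∈ F and b_i ∈ F. Then there exists a discrete vector field V on P that is acyclic and in which every element of P belongs to exactly one pair except for a single unpaired element, namely the (k+1)-element set {v, b₁, …, b_k}. -/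
/-!
Pair each cell `F` with `F ∆ {aᵢ}`, where `i` is the first index with `bᵢ ∉ F`. Toggling `aᵢ`
keeps `F` in the cone and does not move the first gap, so this is a matching, and the only cell
without a gap, `{v, b₁, …, b_k}`, is left unpaired. Along a `V`-path the first gap strictly
decreases: leaving `(C, C ∪ {aᵢ})` through a different face `C'` forces `aᵢ ∈ C'` while
`bᵢ ∉ C'`, so the gap `j` of `C'` satisfies `j ≤ i`, and `j ≠ i` because `aⱼ ∉ C'`.
-/

open Finset

theorem isAcyclicDVF_of_potential_lt {α β : Type*} [Preorder β] {V : Set (Finset α × Finset α)}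
    (μ : Finset α × Finset α → β)
    (hμ : ∀ p ∈ V, ∀ q ∈ V, q.1 ⊆ p.2 → q.1.card + 1 = p.2.card → q.1 ≠ p.1 → μ q < μ p) :
    IsAcyclicDVF V := by
  rintro ⟨r, p, -, ⟨hV, hstep⟩, hsub, hcard, hne⟩
  have hchain : ∀ n ≤ r, μ (p n) ≤ μ (p 0) := by
    intro n
    induction n with
    | zero => exact fun _ => le_rfl
    | succ n ih =>
      intro hn
      obtain ⟨hs, hc, hn'⟩ := hstep n hn
      exact (hμ _ (hV n (by omega)) _ (hV _ hn) hs hc hn').le.trans (ih (by omega))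
  exact lt_irrefl _ ((hμ _ (hV r le_rfl) _ (hV 0 (Nat.zero_le r)) hsub hcard hne).trans_le
    (hchain r le_rfl))

theorem Finset.mem_of_subset_insert_of_card_eq {α : Type*} [DecidableEq α] {s t : Finset α}
    {x : α} (hx : x ∉ t) (hst : s ⊆ insert x t) (hcard : s.card + 1 = (insert x t).card)
    (hne : s ≠ t) : x ∈ s := by
  by_contra hxs
  rw [card_insert_of_notMem hx] at hcard
  exact hne (eq_of_subset_of_card_le ((subset_insert_iff_of_notMem hxs).1 hst) (by omega))

section FirstGap

variable {ι α : Type*} [Fintype ι] [LinearOrder ι] [DecidableEq α] (b : ι → α)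

def firstGap (F : Finset α) : WithTop ι :=
  (univ.filter fun i => b i ∉ F).min

variable {b}

theorem notMem_of_firstGap_eq {F : Finset α} {i : ι} (h : firstGap b F = i) : b i ∉ F :=
  (mem_filter.1 (mem_of_min h)).2

theorem mem_of_lt_firstGap {F : Finset α} {i j : ι} (h : firstGap b F = i) (hj : j < i) :
    b j ∈ F := by
  by_contra hbj
  exact notMem_of_lt_min hj h (mem_filter.2 ⟨mem_univ j, hbj⟩)

theorem firstGap_eq_top_iff {F : Finset α} : firstGap b F = ⊤ ↔ ∀ i, b i ∈ F := by
  simp [firstGap, filter_eq_empty_iff]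

theorem firstGap_insert {F : Finset α} {x : α} (hx : ∀ i, b i ≠ x) :
    firstGap b (insert x F) = firstGap b F := by
  simp [firstGap, hx]

theorem firstGap_erase {F : Finset α} {x : α} (hx : ∀ i, b i ≠ x) :
    firstGap b (F.erase x) = firstGap b F := by
  simp [firstGap, hx]

end FirstGap

section ToggleField

variable {ι α : Type*} [DecidableEq α]

def togglePair (x : α) (F : Finset α) : Finset α × Finset α :=
  if x ∈ F then (F.erase x, F) else (F, insert x F)

variable (X : Set (Finset α)) (g : Finset α → WithTop ι) (a : ι → α)

def toggleField : Set (Finset α × Finset α) :=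
  {p | p.1 ∈ X ∧ ∃ i : ι, g p.1 = i ∧ a i ∉ p.1 ∧ p.2 = insert (a i) p.1}

variable {X g a}

theorem exists_eq_togglePair_of_mem_toggleField
    (hins : ∀ F ∈ X, ∀ i : ι, g F = i → a i ∉ F →
      insert (a i) F ∈ X ∧ g (insert (a i) F) = i)
    {p : Finset α × Finset α} (hp : p ∈ toggleField X g a)
    {σ : Finset α} (hσ : σ = p.1 ∨ σ = p.2) :
    ∃ i : ι, g σ = i ∧ p = togglePair (a i) σ := by
  obtain ⟨C, D⟩ := p
  obtain ⟨hC, i, hi, hai, rfl : D = insert (a i) C⟩ := hp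
  refine ⟨i, ?_⟩
  rcases hσ with rfl | rfl
  · exact ⟨hi, by simp [togglePair, hai]⟩
  · exact ⟨(hins C hC i hi hai).2, by simp [togglePair, erase_insert hai]⟩

theorem isDVF_toggleField
    (hins : ∀ F ∈ X, ∀ i : ι, g F = i → a i ∉ F →
      insert (a i) F ∈ X ∧ g (insert (a i) F) = i) :
    IsDVF X (toggleField X g a) := by
  refine ⟨?_, fun p hp q hq σ hσp hσq => ?_⟩
  · rintro ⟨C, D⟩ ⟨hC, i, hi, hai, rfl : D = insert (a i) C⟩
    exact ⟨hC, (hins C hC i hi hai).1, subset_insert _ _, card_insert_of_notMem hai⟩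
  · obtain ⟨i, hi, rfl⟩ := exists_eq_togglePair_of_mem_toggleField hins hp hσp
    obtain ⟨j, hj, rfl⟩ := exists_eq_togglePair_of_mem_toggleField hins hq hσq
    rw [WithTop.coe_inj.1 (hi.symm.trans hj)]

theorem toggleField_ne_of_eq_top
    (hins : ∀ F ∈ X, ∀ i : ι, g F = i → a i ∉ F →
      insert (a i) F ∈ X ∧ g (insert (a i) F) = i)
    {F : Finset α} (hF : g F = ⊤) {p : Finset α × Finset α}
    (hp : p ∈ toggleField X g a) : p.1 ≠ F ∧ p.2 ≠ F := by
  have hne : ∀ σ, σ = p.1 ∨ σ = p.2 → σ ≠ F := fun σ hσ hσF => by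
    obtain ⟨i, hi, -⟩ := exists_eq_togglePair_of_mem_toggleField hins hp hσ
    exact WithTop.coe_ne_top (hi.symm.trans (hσF ▸ hF))
  exact ⟨hne _ (Or.inl rfl), hne _ (Or.inr rfl)⟩

theorem existsUnique_mem_toggleField
    (hins : ∀ F ∈ X, ∀ i : ι, g F = i → a i ∉ F →
      insert (a i) F ∈ X ∧ g (insert (a i) F) = i)
    (herase : ∀ F ∈ X, ∀ i : ι, g F = i → a i ∈ F →
      F.erase (a i) ∈ X ∧ g (F.erase (a i)) = i)
    {F : Finset α} (hF : F ∈ X) (hgF : g F ≠ ⊤) :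
    ∃! p, p ∈ toggleField X g a ∧ (F = p.1 ∨ F = p.2) := by
  obtain ⟨i, hi⟩ := WithTop.ne_top_iff_exists.1 hgF
  have hmem : togglePair (a i) F ∈ toggleField X g a := by
    by_cases hai : a i ∈ F
    · obtain ⟨hX, hg⟩ := herase F hF i hi.symm hai
      rw [togglePair, if_pos hai]
      exact ⟨hX, i, hg, notMem_erase _ _, (insert_erase hai).symm⟩
    · rw [togglePair, if_neg hai]
      exact ⟨hF, i, hi.symm, hai, rfl⟩
  have hF_mem : F = (togglePair (a i) F).1 ∨ F = (togglePair (a i) F).2 := by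
    unfold togglePair; split_ifs <;> simp
  exact ⟨_, ⟨hmem, hF_mem⟩, fun q ⟨hq, hFq⟩ =>
    (isDVF_toggleField hins).2 q hq _ hmem F hFq hF_mem⟩

end ToggleField

section CrossPolytopeCone

variable {ι α : Type*} [DecidableEq α]

def crossPolytopeCone (v : α) (a b : ι → α) : Set (Finset α) :=
  {F | v ∈ F ∧ (∀ x ∈ F, x = v ∨ (∃ i, x = a i) ∨ (∃ i, x = b i)) ∧
    ∀ i, ¬ (a i ∈ F ∧ b i ∈ F)}

variable {v : α} {a b : ι → α} {F : Finset α}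

theorem insert_mem_crossPolytopeCone (ha : Function.Injective a) (hab : ∀ i j, a i ≠ b j)
    (hF : F ∈ crossPolytopeCone v a b) {i : ι} (hbi : b i ∉ F) :
    insert (a i) F ∈ crossPolytopeCone v a b := by
  obtain ⟨hv, hsupp, hanti⟩ := hF
  refine ⟨mem_insert_of_mem hv, ?_, fun j ⟨haj, hbj⟩ => ?_⟩
  · intro x hx
    rcases mem_insert.1 hx with rfl | hx
    · exact Or.inr (Or.inl ⟨i, rfl⟩)
    · exact hsupp x hx
  · have hbj : b j ∈ F := (mem_insert.1 hbj).resolve_left fun h => hab i j h.symm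
    rcases mem_insert.1 haj with h | h
    · exact hbi (ha h ▸ hbj)
    · exact hanti j ⟨h, hbj⟩

theorem erase_mem_crossPolytopeCone (hF : F ∈ crossPolytopeCone v a b) {x : α} (hx : x ≠ v) :
    F.erase x ∈ crossPolytopeCone v a b := by
  obtain ⟨hv, hsupp, hanti⟩ := hF
  exact ⟨mem_erase.2 ⟨hx.symm, hv⟩, fun y hy => hsupp y (mem_of_mem_erase hy),
    fun i ⟨hai, hbi⟩ => hanti i ⟨mem_of_mem_erase hai, mem_of_mem_erase hbi⟩⟩

theorem eq_insert_image_of_forall_mem [Fintype ι] (hF : F ∈ crossPolytopeCone v a b)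
    (hb : ∀ i, b i ∈ F) : F = insert v (univ.image b) := by
  obtain ⟨hv, hsupp, hanti⟩ := hF
  ext x
  simp only [mem_insert, mem_image, mem_univ, true_and]
  constructor
  · intro hx
    rcases hsupp x hx with rfl | ⟨i, rfl⟩ | ⟨i, rfl⟩
    · exact Or.inl rfl
    · exact absurd ⟨hx, hb i⟩ (hanti i)
    · exact Or.inr ⟨i, rfl⟩
  · rintro (rfl | ⟨i, rfl⟩)
    · exact hv
    · exact hb i

end CrossPolytopeCone

theorem firstGap_lt_of_toggleField_step {ι α : Type*} [Fintype ι] [LinearOrder ι]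
    [DecidableEq α] {X : Set (Finset α)} {a b : ι → α} (hab : ∀ i j, a i ≠ b j)
    {p q : Finset α × Finset α} (hp : p ∈ toggleField X (firstGap b) a)
    (hq : q ∈ toggleField X (firstGap b) a) (hsub : q.1 ⊆ p.2)
    (hcard : q.1.card + 1 = p.2.card) (hne : q.1 ≠ p.1) :
    firstGap b q.1 < firstGap b p.1 := by
  obtain ⟨C, D⟩ := p
  obtain ⟨-, i, hi, hai, rfl : D = insert (a i) C⟩ := hp
  obtain ⟨C', D'⟩ := q
  obtain ⟨-, j, hj, haj, -⟩ := hq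
  have haiC' : a i ∈ C' := mem_of_subset_insert_of_card_eq hai hsub hcard hne
  have hbiC' : b i ∉ C' := fun h =>
    ((mem_insert.1 (hsub h)).resolve_left fun h' => hab i i h'.symm) |>
      notMem_of_firstGap_eq hi
  have hji : j ≤ i := not_lt.1 fun hij => hbiC' (mem_of_lt_firstGap hj hij)
  have hji' : j ≠ i := by
    rintro rfl
    exact haj haiC'
  simp only [hi, hj]
  exact WithTop.coe_lt_coe.2 (lt_of_le_of_ne hji hji')

theorem stmt7_general {α : Type*} [DecidableEq α] (k : ℕ)
    (v : α) (a b : Fin k → α)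
    (ha : Function.Injective a)
    (hab : ∀ i j, a i ≠ b j) (hav : ∀ i, a i ≠ v)
    (P : Set (Finset α))
    (hP : P = {F | v ∈ F ∧ (∀ x ∈ F, x = v ∨ (∃ i, x = a i) ∨ (∃ i, x = b i)) ∧
      ∀ i, ¬ (a i ∈ F ∧ b i ∈ F)}) :
    ∃ V : Set (Finset α × Finset α), IsDVF P V ∧ IsAcyclicDVF V ∧
      (∀ σ ∈ P, σ ≠ insert v (Finset.image b Finset.univ) →
        ∃! p, p ∈ V ∧ (σ = p.1 ∨ σ = p.2)) ∧
      ∀ p ∈ V, p.1 ≠ insert v (Finset.image b Finset.univ) ∧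
        p.2 ≠ insert v (Finset.image b Finset.univ) := by
  obtain rfl : P = crossPolytopeCone v a b := hP
  have hins : ∀ F ∈ crossPolytopeCone v a b, ∀ i : Fin k, firstGap b F = i → a i ∉ F →
      insert (a i) F ∈ crossPolytopeCone v a b ∧ firstGap b (insert (a i) F) = i :=
    fun F hF i hi _ => ⟨insert_mem_crossPolytopeCone ha hab hF (notMem_of_firstGap_eq hi),
      (firstGap_insert fun j => (hab i j).symm).trans hi⟩
  have herase : ∀ F ∈ crossPolytopeCone v a b, ∀ i : Fin k, firstGap b F = i → a i ∈ F →
      F.erase (a i) ∈ crossPolytopeCone v a b ∧ firstGap b (F.erase (a i)) = i :=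
    fun F hF i hi _ => ⟨erase_mem_crossPolytopeCone hF (hav i),
      (firstGap_erase fun j => (hab i j).symm).trans hi⟩
  have htop : firstGap b (insert v (univ.image b)) = ⊤ :=
    firstGap_eq_top_iff.2 fun i => mem_insert_of_mem (mem_image_of_mem b (mem_univ i))
  refine ⟨toggleField _ (firstGap b) a, isDVF_toggleField hins,
    isAcyclicDVF_of_potential_lt (fun p => firstGap b p.1)
      fun p hp q hq => firstGap_lt_of_toggleField_step hab hp hq,
    fun σ hσ hne => existsUnique_mem_toggleField hins herase hσ fun h =>
      hne (eq_insert_image_of_forall_mem hσ (firstGap_eq_top_iff.1 h)),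
    fun p hp => toggleField_ne_of_eq_top hins htop hp⟩

/-- On the combinatorial model `P` of the local lower star of an index-`k`
PL critical vertex `v` (the cone at `v` over the boundary of a `k`-dimensional
cross-polytope with antipodal vertex pairs `{aᵢ, bᵢ}`), there is an acyclic discrete
vector field in which every cell belongs to exactly one pair except the single unpaired
cell `{v, b₁, …, b_k}`. -/
theorem stmt7 {α : Type*} [DecidableEq α] (k : ℕ) (hk : 1 ≤ k)
    (v : α) (a b : Fin k → α)
    (ha : Function.Injective a) (hb : Function.Injective b)
    (hab : ∀ i j, a i ≠ b j) (hav : ∀ i, a i ≠ v) (hbv : ∀ i, b i ≠ v)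
    (P : Set (Finset α))
    (hP : P = {F | v ∈ F ∧ (∀ x ∈ F, x = v ∨ (∃ i, x = a i) ∨ (∃ i, x = b i)) ∧
      ∀ i, ¬ (a i ∈ F ∧ b i ∈ F)}) :
    ∃ V : Set (Finset α × Finset α), IsDVF P V ∧ IsAcyclicDVF V ∧
      (∀ σ ∈ P, σ ≠ insert v (Finset.image b Finset.univ) →
        ∃! p, p ∈ V ∧ (σ = p.1 ∨ σ = p.2)) ∧
      ∀ p ∈ V, p.1 ≠ insert v (Finset.image b Finset.univ) ∧
        p.2 ≠ insert v (Finset.image b Finset.univ) :=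
  stmt7_general k v a b ha hab hav P hP
end

section
/- Let α be a type with decidable equality, let X be a finite family of finite subsets (Finsets) of α, let V be a discrete vector field on X, and let g : Finset α → ℝ. Suppose: (a) g(C) = g(D) for every pair (C, D) ∈ V; and (b) g(C') ≤ g(D) whenever C', D ∈ X with C' ⊆ D and |C'| = |D| − 1. If for every real number c the restriction of V to {σ ∈ X : g(σ) = c} (i.e., the set of pairs of V with both members in this level set) is acyclic, then V itself is acyclic. -/
/-!
Along a `V`-path the value of `g` on the lower cells can only decrease: `g` is constant on each
pair and does not increase when passing from `D_i` to its facet `C_{i+1}`. Closing the path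
forces `g (C_0) ≤ g (C_r)`, so `g` is constant along a closed `V`-path, which therefore lies in a
single level set of `g`.
-/

section GradientPath

variable {α : Type*} {X : Set (Finset α)} {V : Set (Finset α × Finset α)} {g : Finset α → ℝ}

lemma IsDVF.apply_fst_le_of_subset_snd (hV : IsDVF X V) (ha : ∀ p ∈ V, g p.1 = g p.2)
    (hb : ∀ C' ∈ X, ∀ D ∈ X, C' ⊆ D → C'.card + 1 = D.card → g C' ≤ g D)
    {p q : Finset α × Finset α} (hp : p ∈ V) (hq : q ∈ V) (hsub : q.1 ⊆ p.2)
    (hcard : q.1.card + 1 = p.2.card) : g q.1 ≤ g p.1 :=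
  ha p hp ▸ hb _ (hV.1 q hq).1 _ (hV.1 p hp).2.1 hsub hcard

lemma IsVPath.antitoneOn_apply_fst {r : ℕ} {p : ℕ → Finset α × Finset α} (hV : IsDVF X V)
    (ha : ∀ p ∈ V, g p.1 = g p.2)
    (hb : ∀ C' ∈ X, ∀ D ∈ X, C' ⊆ D → C'.card + 1 = D.card → g C' ≤ g D)
    (hp : IsVPath V r p) : AntitoneOn (fun i ↦ g (p i).1) (Set.Iic r) := by
  refine antitoneOn_of_succ_le Set.ordConnected_Iic fun i _ _ hi ↦ ?_
  rw [Order.succ_eq_add_one] at hi ⊢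
  have hi : i < r := Set.mem_Iic.1 hi
  obtain ⟨hsub, hcard, -⟩ := hp.2 i hi
  exact hV.apply_fst_le_of_subset_snd ha hb (hp.1 i hi.le) (hp.1 (i + 1) hi) hsub hcard

lemma IsVPath.apply_fst_eq_of_closed {r : ℕ} {p : ℕ → Finset α × Finset α} (hV : IsDVF X V)
    (ha : ∀ p ∈ V, g p.1 = g p.2)
    (hb : ∀ C' ∈ X, ∀ D ∈ X, C' ⊆ D → C'.card + 1 = D.card → g C' ≤ g D)
    (hp : IsVPath V r p) (hsub : (p 0).1 ⊆ (p r).2) (hcard : (p 0).1.card + 1 = (p r).2.card)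
    {i : ℕ} (hi : i ≤ r) : g (p i).1 = g (p 0).1 := by
  have hanti := hp.antitoneOn_apply_fst hV ha hb
  have hclose : g (p 0).1 ≤ g (p r).1 :=
    hV.apply_fst_le_of_subset_snd ha hb (hp.1 r le_rfl) (hp.1 0 r.zero_le) hsub hcard
  have hr_le : g (p r).1 ≤ g (p i).1 := hanti hi (Set.mem_Iic.2 le_rfl) hi
  exact le_antisymm (hanti (Set.mem_Iic.2 r.zero_le) hi i.zero_le) (hclose.trans hr_le)

end GradientPath

theorem stmt8_general {α : Type*} (X : Finset (Finset α))
    (V : Set (Finset α × Finset α)) (hV : IsDVF (↑X) V) (g : Finset α → ℝ)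
    (ha : ∀ p ∈ V, g p.1 = g p.2)
    (hb : ∀ C' ∈ X, ∀ D ∈ X, C' ⊆ D → C'.card + 1 = D.card → g C' ≤ g D)
    (hlevel : ∀ c : ℝ, IsAcyclicDVF {p ∈ V | g p.1 = c ∧ g p.2 = c}) :
    IsAcyclicDVF V := by
  rintro ⟨r, p, hr, hp, hsub, hcard, hne⟩
  have hlevel_eq (i : ℕ) (hi : i ≤ r) : g (p i).1 = g (p 0).1 :=
    hp.apply_fst_eq_of_closed hV ha hb hsub hcard hi
  refine hlevel (g (p 0).1) ⟨r, p, hr, ⟨fun i hi ↦ ⟨hp.1 i hi, hlevel_eq i hi, ?_⟩, hp.2⟩,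
    hsub, hcard, hne⟩
  rw [← ha _ (hp.1 i hi), hlevel_eq i hi]

/-- Gluing acyclic pairings. If `g` is constant on each pair of `V`,
weakly increasing along codimension-one faces in `X`, and the restriction of `V` to each
level set of `g` is acyclic, then `V` is acyclic. -/
theorem stmt8 {α : Type*} [DecidableEq α] (X : Finset (Finset α))
    (V : Set (Finset α × Finset α)) (hV : IsDVF (↑X) V) (g : Finset α → ℝ)
    (ha : ∀ p ∈ V, g p.1 = g p.2)
    (hb : ∀ C' ∈ X, ∀ D ∈ X, C' ⊆ D → C'.card + 1 = D.card → g C' ≤ g D)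
    (hlevel : ∀ c : ℝ, IsAcyclicDVF {p ∈ V | g p.1 = c ∧ g p.2 = c}) :
    IsAcyclicDVF V :=
  stmt8_general X V hV g ha hb hlevel
end

section
/- Let n ≥ 1 and let f₁, …, f_n : ℝ² → ℝ be affine maps with nonzero linear parts, with zero sets (lines) L_i = f_i⁻¹({0}). Assume the lines are in general position: for all i ≠ j the intersection L_i ∩ L_j is a singleton, and no point of ℝ² lies on three pairwise distinct lines L_i, L_j, L_k. Then the complement ℝ² \ (⋃ᵢ L_i) has exactly 2n unbounded connected components. -/
/-!
Off the lines, a point lies in the open convex cell where every `f i` has a prescribed sign, so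
the components of the complement are the nonempty cells. A cell is unbounded iff its sign
pattern is realized by the linear parts at some direction `v`: then the ray `t • v` eventually
stays in it, and conversely normalized far points of the cell converge to a direction with the
weak signs, which can be made strict because no two lines are parallel. Such patterns of `n`
pairwise independent linear forms on `ℝ²` number `2n`: adding a form `ℓ` keeps every old pattern
on at least one side of `ker ℓ` and splits exactly the two patterns realized on the line `ker ℓ`.
-/

open Filter Topology Module Function

def boolSign (b : Bool) : ℝ := if b then 1 else -1

@[simp] lemma boolSign_true : boolSign true = 1 := rfl

@[simp] lemma boolSign_false : boolSign false = -1 := rfl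

@[simp] lemma boolSign_not (b : Bool) : boolSign (!b) = -boolSign b := by cases b <;> simp

lemma boolSign_ne_zero (b : Bool) : boolSign b ≠ 0 := by cases b <;> simp

lemma eq_of_boolSign_mul_pos {a b : Bool} {x : ℝ} (ha : 0 < boolSign a * x)
    (hb : 0 < boolSign b * x) : a = b := by
  cases a <;> cases b <;> simp at * <;> linarith

lemma boolSign_decide_mul_pos {x : ℝ} (hx : x ≠ 0) : 0 < boolSign (decide (0 < x)) * x := by
  rcases hx.lt_or_gt with hx | hx <;> simp [hx, hx.not_gt]

lemma eventually_pos_add_mul {a b : ℝ} (h : 0 < a ∨ a = 0 ∧ 0 < b) :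
    ∀ᶠ δ in 𝓝[>] 0, 0 < a + δ * b := by
  rcases h with ha | ⟨rfl, hb⟩
  · have hcont : Tendsto (fun δ : ℝ => a + δ * b) (𝓝 0) (𝓝 a) := by
      have : Continuous fun δ : ℝ => a + δ * b := by fun_prop
      simpa using this.tendsto 0
    exact nhdsWithin_le_nhds (hcont.eventually (eventually_gt_nhds ha))
  · filter_upwards [self_mem_nhdsWithin] with δ (hδ : 0 < δ)
    simpa using mul_pos hδ hb

section SignPattern

variable {ι E : Type*} [AddCommGroup E] [Module ℝ E]

def HasSignPattern (g : ι → E →ₗ[ℝ] ℝ) (ε : ι → Bool) (v : E) : Prop :=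
  ∀ i, 0 < boolSign (ε i) * g i v

def signPatterns (g : ι → E →ₗ[ℝ] ℝ) : Set (ι → Bool) :=
  {ε | ∃ v, HasSignPattern g ε v}

def signPatternsOnSide (g : ι → E →ₗ[ℝ] ℝ) (ℓ : E →ₗ[ℝ] ℝ) (b : Bool) : Set (ι → Bool) :=
  {ε | ∃ v, HasSignPattern g ε v ∧ 0 < boolSign b * ℓ v}

variable {g : ι → E →ₗ[ℝ] ℝ} {ε ε₀ : ι → Bool} {v w : E}

lemma HasSignPattern.eq (h : HasSignPattern g ε v) (h₀ : HasSignPattern g ε₀ v) : ε = ε₀ :=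
  funext fun i => eq_of_boolSign_mul_pos (h i) (h₀ i)

lemma HasSignPattern.ne_zero [Nonempty ι] (h : HasSignPattern g ε v) : v ≠ 0 := by
  rintro rfl
  simpa using h (Classical.arbitrary ι)

lemma hasSignPattern_smul_iff {t : ℝ} (ht : 0 < t) :
    HasSignPattern g ε (t • v) ↔ HasSignPattern g ε v := by
  simp only [HasSignPattern, map_smul, smul_eq_mul, mul_left_comm _ t, mul_pos_iff_of_pos_left ht]

lemma hasSignPattern_neg_iff : HasSignPattern g (fun i => !ε i) (-v) ↔ HasSignPattern g ε v := by
  simp [HasSignPattern]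

lemma hasSignPattern_decide (hv : ∀ i, g i v ≠ 0) :
    HasSignPattern g (fun i => decide (0 < g i v)) v :=
  fun i => boolSign_decide_mul_pos (hv i)

lemma HasSignPattern.eq_or_eq_not_of_smul (h₀ : HasSignPattern g ε₀ v) {t : ℝ}
    (h : HasSignPattern g ε (t • v)) : ε = ε₀ ∨ ε = fun i => !ε₀ i := by
  rcases lt_trichotomy t 0 with ht | rfl | ht
  · rw [← neg_neg t, neg_smul, ← hasSignPattern_neg_iff, neg_neg,
      hasSignPattern_smul_iff (neg_pos.2 ht)] at h
    right
    simpa using congrArg (fun ε i => !ε i) (h.eq h₀)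
  · exact .inl <| funext fun i => absurd (h i) (by simp)
  · exact .inl <| ((hasSignPattern_smul_iff ht).1 h).eq h₀

lemma exists_boolSign_mul_pos {ℓ : E →ₗ[ℝ] ℝ} (hℓ : ℓ ≠ 0) (b : Bool) :
    ∃ w, 0 < boolSign b * ℓ w := by
  obtain ⟨w, hw⟩ := DFunLike.ne_iff.1 hℓ
  refine ⟨(boolSign b * ℓ w) • w, ?_⟩
  have : boolSign b * ℓ w ≠ 0 := mul_ne_zero (boolSign_ne_zero b) hw
  calc 0 < (boolSign b * ℓ w) ^ 2 := sq_pos_of_ne_zero this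
    _ = boolSign b * ℓ ((boolSign b * ℓ w) • w) := by rw [map_smul, smul_eq_mul]; ring

lemma eventually_hasSignPattern_add_smul [Finite ι]
    (h : ∀ i, 0 < boolSign (ε i) * g i v ∨ g i v = 0 ∧ 0 < boolSign (ε i) * g i w) :
    ∀ᶠ δ in 𝓝[>] (0 : ℝ), HasSignPattern g ε (v + δ • w) := by
  refine eventually_all.2 fun i => ?_
  have hi : 0 < boolSign (ε i) * g i v ∨ boolSign (ε i) * g i v = 0 ∧ 0 < boolSign (ε i) * g i w :=
    (h i).imp_right fun h => ⟨by rw [h.1, mul_zero], h.2⟩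
  filter_upwards [eventually_pos_add_mul hi] with δ hδ
  rw [map_add, map_smul, smul_eq_mul]
  linarith

/-- At most one of the pairwise independent forms vanishes at `v`; moving `v` slightly off
its kernel makes every sign strict. -/
lemma mem_signPatterns_of_nonneg [Finite ι] (hg : ∀ i, g i ≠ 0)
    (hind : Pairwise (Disjoint on fun i => LinearMap.ker (g i))) (hv : v ≠ 0)
    (h : ∀ i, 0 ≤ boolSign (ε i) * g i v) : ε ∈ signPatterns g := by
  by_cases hz : ∃ i₀, g i₀ v = 0
  · obtain ⟨i₀, hi₀⟩ := hz
    obtain ⟨w, hw⟩ := exists_boolSign_mul_pos (hg i₀) (ε i₀)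
    have hδ : ∀ᶠ δ in 𝓝[>] (0 : ℝ), HasSignPattern g ε (v + δ • w) :=
      eventually_hasSignPattern_add_smul fun i => by
        rcases eq_or_ne i i₀ with rfl | hne
        · exact .inr ⟨hi₀, hw⟩
        · refine .inl <| (h i).lt_of_ne' <| mul_ne_zero (boolSign_ne_zero _) fun hi => hv ?_
          exact Submodule.disjoint_def.1 (hind hne) v hi hi₀
    obtain ⟨δ, hδ⟩ := hδ.exists
    exact ⟨_, hδ⟩
  · push Not at hz
    exact ⟨v, fun i => (h i).lt_of_ne' <| mul_ne_zero (boolSign_ne_zero _) (hz i)⟩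

section Side

variable [Finite ι] {ℓ : E →ₗ[ℝ] ℝ}

lemma mem_signPatternsOnSide_of_apply_eq_zero (hℓ : ℓ ≠ 0) (h : HasSignPattern g ε v)
    (hv : ℓ v = 0) (b : Bool) : ε ∈ signPatternsOnSide g ℓ b := by
  obtain ⟨w, hw⟩ := exists_boolSign_mul_pos hℓ b
  have hg := eventually_hasSignPattern_add_smul (w := w) fun i => .inl (h i)
  obtain ⟨δ, hδg, hδ⟩ := (hg.and self_mem_nhdsWithin).exists
  refine ⟨v + δ • w, hδg, ?_⟩
  rw [map_add, map_smul, hv, smul_eq_mul, zero_add, mul_left_comm]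
  exact mul_pos hδ hw

lemma signPatternsOnSide_union (hℓ : ℓ ≠ 0) :
    signPatternsOnSide g ℓ true ∪ signPatternsOnSide g ℓ false = signPatterns g := by
  refine subset_antisymm
    (Set.union_subset (fun ε ⟨v, hv, _⟩ => ⟨v, hv⟩) fun ε ⟨v, hv, _⟩ => ⟨v, hv⟩) ?_
  rintro ε ⟨v, hv⟩
  rcases lt_trichotomy (ℓ v) 0 with h | h | h
  · exact .inr ⟨v, hv, by simpa using h⟩
  · exact .inl (mem_signPatternsOnSide_of_apply_eq_zero hℓ hv h true)
  · exact .inl ⟨v, hv, by simpa using h⟩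

/-- A pattern realized on both sides of `ker ℓ` is realized on `ker ℓ` itself, where the
segment between the two realizing vectors crosses it. -/
lemma signPatternsOnSide_inter (hℓ : ℓ ≠ 0) :
    signPatternsOnSide g ℓ true ∩ signPatternsOnSide g ℓ false =
      signPatterns fun i => (g i).domRestrict (LinearMap.ker ℓ) := by
  ext ε
  constructor
  · rintro ⟨⟨p, hp, hℓp⟩, ⟨q, hq, hℓq⟩⟩
    simp only [boolSign_true, one_mul, boolSign_false, neg_mul, neg_pos] at hℓp hℓq
    refine ⟨⟨ℓ p • q - ℓ q • p, by simp [mul_comm]⟩, fun i => ?_⟩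
    have hpq : boolSign (ε i) * g i (ℓ p • q - ℓ q • p) =
        ℓ p * (boolSign (ε i) * g i q) + -ℓ q * (boolSign (ε i) * g i p) := by
      simp only [map_sub, map_smul, smul_eq_mul]; ring
    show 0 < boolSign (ε i) * g i (ℓ p • q - ℓ q • p)
    exact hpq ▸ add_pos (mul_pos hℓp (hq i)) (mul_pos (neg_pos.2 hℓq) (hp i))
  · rintro ⟨⟨u, hu⟩, h⟩
    exact ⟨mem_signPatternsOnSide_of_apply_eq_zero hℓ h hu true,
      mem_signPatternsOnSide_of_apply_eq_zero hℓ h hu false⟩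

end Side

lemma hasSignPattern_snoc_iff {m : ℕ} {g : Fin (m + 1) → E →ₗ[ℝ] ℝ} {ε : Fin m → Bool} {b : Bool} :
    HasSignPattern g (Fin.snoc ε b) v ↔
      HasSignPattern (Fin.init g) ε v ∧ 0 < boolSign b * g (Fin.last m) v := by
  simp only [HasSignPattern, Fin.forall_fin_succ', Fin.snoc_castSucc, Fin.snoc_last, Fin.init]

lemma ncard_signPatterns_fin_succ {m : ℕ} (g : Fin (m + 1) → E →ₗ[ℝ] ℝ)
    (hℓ : g (Fin.last m) ≠ 0) :
    (signPatterns g).ncard = (signPatterns (Fin.init g)).ncard +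
      (signPatterns fun i =>
        (Fin.init g i).domRestrict (LinearMap.ker (g (Fin.last m)))).ncard := by
  set side := signPatternsOnSide (Fin.init g) (g (Fin.last m))
  have hsplit :
      signPatterns g = (Fin.snoc · true) '' side true ∪ (Fin.snoc · false) '' side false := by
    ext ε
    rw [← Fin.snoc_init_self ε]
    cases ε (Fin.last m) <;>
      simp [signPatterns, side, signPatternsOnSide, hasSignPattern_snoc_iff]
  have hdisj : Disjoint ((Fin.snoc (α := fun _ => Bool) · true) '' side true)
      ((Fin.snoc · false) '' side false) := by
    simp [Set.disjoint_left]
  have hinj (b : Bool) : Injective fun ε : Fin m → Bool => (Fin.snoc ε b : Fin (m + 1) → Bool) :=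
    fun _ _ h => (Fin.snoc_injective2 h).1
  rw [hsplit, Set.ncard_union_eq hdisj, Set.ncard_image_of_injective _ (hinj true),
    Set.ncard_image_of_injective _ (hinj false), ← Set.ncard_union_add_ncard_inter,
    signPatternsOnSide_union hℓ, signPatternsOnSide_inter hℓ]

lemma ncard_signPatterns_of_finrank_eq_one [Nonempty ι] (hE : finrank ℝ E = 1)
    (hg : ∀ i, g i ≠ 0) : (signPatterns g).ncard = 2 := by
  obtain ⟨v₀, -, hspan⟩ := finrank_eq_one_iff'.1 hE
  have hv₀ (i : ι) : g i v₀ ≠ 0 := fun h => hg i <| LinearMap.ext fun w => by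
    obtain ⟨c, rfl⟩ := hspan w
    simp [h]
  have h₀ := hasSignPattern_decide hv₀
  have hpair : signPatterns g = {fun i => decide (0 < g i v₀), fun i => !decide (0 < g i v₀)} := by
    refine subset_antisymm ?_ (Set.insert_subset ⟨v₀, h₀⟩ <| Set.singleton_subset_iff.2
      ⟨-v₀, hasSignPattern_neg_iff.2 h₀⟩)
    rintro ε ⟨v, hv⟩
    obtain ⟨c, rfl⟩ := hspan v
    exact h₀.eq_or_eq_not_of_smul hv
  rw [hpair, Set.ncard_pair]
  intro h
  simpa using congrFun h (Classical.arbitrary ι)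

theorem ncard_signPatterns_of_finrank_eq_two (hE : finrank ℝ E = 2) {m : ℕ} (hm : 1 ≤ m)
    (g : Fin m → E →ₗ[ℝ] ℝ) (hg : ∀ i, g i ≠ 0)
    (hind : Pairwise (Disjoint on fun i => LinearMap.ker (g i))) :
    (signPatterns g).ncard = 2 * m := by
  have := Module.finite_of_finrank_eq_succ hE
  induction m, hm using Nat.le_induction with
  | base =>
    have huniv : signPatterns g = Set.univ :=
      Set.eq_univ_of_forall fun ε => (exists_boolSign_mul_pos (hg 0) (ε 0)).imp fun w hw i => by
        rwa [Subsingleton.elim i 0]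
    simp [huniv, Set.ncard_univ]
  | succ m hm ih =>
    have : Nonempty (Fin m) := ⟨⟨0, hm⟩⟩
    have hker : finrank ℝ (LinearMap.ker (g (Fin.last m))) = 1 := by
      have hrank := Module.Dual.finrank_ker_add_one_of_ne_zero (hg (Fin.last m))
      rw [hE] at hrank
      omega
    have hrestrict (i : Fin m) :
        (Fin.init g i).domRestrict (LinearMap.ker (g (Fin.last m))) ≠ 0 := by
      intro h
      have hle : LinearMap.ker (g (Fin.last m)) ≤ LinearMap.ker (Fin.init g i) := fun v hv =>
        LinearMap.congr_fun h ⟨v, hv⟩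
      have hbot : LinearMap.ker (g (Fin.last m)) = ⊥ :=
        (hind (Fin.castSucc_lt_last i).ne).eq_bot_of_ge hle
      rw [hbot, finrank_bot] at hker
      exact zero_ne_one hker
    rw [ncard_signPatterns_fin_succ g (hg _),
      ih (Fin.init g) (fun i => hg _) (hind.comp_of_injective (Fin.castSucc_injective m)),
      ncard_signPatterns_of_finrank_eq_one hker hrestrict]
    ring

end SignPattern

lemma disjoint_ker_linear_of_inter_eq_singleton {k V P W : Type*} [Ring k] [AddCommGroup V]
    [Module k V] [AddTorsor V P] [AddCommGroup W] [Module k W] {f g : P →ᵃ[k] W} {p : P}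
    (h : f ⁻¹' {0} ∩ g ⁻¹' {0} = {p}) :
    Disjoint (LinearMap.ker f.linear) (LinearMap.ker g.linear) := by
  have hp : p ∈ f ⁻¹' {0} ∩ g ⁻¹' {0} := h ▸ rfl
  obtain ⟨hfp, hgp⟩ : f p = 0 ∧ g p = 0 := by simpa using hp
  refine Submodule.disjoint_def.2 fun v hf hg => ?_
  have hvp : v +ᵥ p ∈ f ⁻¹' {0} ∩ g ⁻¹' {0} := by
    simp [AffineMap.map_vadd, LinearMap.mem_ker.1 hf, LinearMap.mem_ker.1 hg, hfp, hgp]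
  rw [h, Set.mem_singleton_iff] at hvp
  simpa using congrArg (· -ᵥ p) hvp

section Cell

variable {ι E : Type*} [NormedAddCommGroup E] [NormedSpace ℝ E]

def cell (f : ι → E →ᵃ[ℝ] ℝ) (ε : ι → Bool) : Set E :=
  {x | ∀ i, 0 < boolSign (ε i) * f i x}

variable {f : ι → E →ᵃ[ℝ] ℝ} {ε ε' : ι → Bool} {x : E}

lemma eq_of_mem_cell (h : x ∈ cell f ε) (h' : x ∈ cell f ε') : ε = ε' :=
  funext fun i => eq_of_boolSign_mul_pos (h i) (h' i)

lemma mem_cell_decide (hx : ∀ i, f i x ≠ 0) : x ∈ cell f fun i => decide (0 < f i x) :=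
  fun i => boolSign_decide_mul_pos (hx i)

lemma cell_subset_setOf_ne_zero : cell f ε ⊆ {x | ∀ i, f i x ≠ 0} :=
  fun _ hx i h => by simpa [h] using hx i

lemma isOpen_cell [Finite ι] [FiniteDimensional ℝ E] : IsOpen (cell f ε) := by
  simp only [cell, Set.ofPred_forall]
  exact isOpen_iInter_of_finite fun i =>
    isOpen_lt continuous_const (continuous_const.mul (f i).continuous_of_finiteDimensional)

lemma convex_cell : Convex ℝ (cell f ε) := by
  simp only [cell, Set.ofPred_forall]
  exact convex_iInter fun i => (convex_Ioi 0).affine_preimage (boolSign (ε i) • f i)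

lemma connectedComponentIn_eq_cell [Finite ι] [FiniteDimensional ℝ E] (hx : x ∈ cell f ε) :
    connectedComponentIn {x | ∀ i, f i x ≠ 0} x = cell f ε := by
  refine subset_antisymm ?_
    (convex_cell.isPreconnected.subset_connectedComponentIn hx cell_subset_setOf_ne_zero)
  set D := {y | ∃ i, boolSign (ε i) * f i y < 0}
  have hD : IsOpen D := by
    simp only [D, Set.ofPred_exists]
    exact isOpen_iUnion fun i =>
      isOpen_lt (continuous_const.mul (f i).continuous_of_finiteDimensional) continuous_const
  have hdisj : Disjoint (cell f ε) D :=
    Set.disjoint_left.2 fun y hy ⟨i, hi⟩ => (hy i).not_gt hi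
  have hcover : {x | ∀ i, f i x ≠ 0} ⊆ cell f ε ∪ D := fun y hy => by
    by_cases h : y ∈ cell f ε
    · exact .inl h
    · simp only [cell, Set.mem_ofPred_eq, not_forall, not_lt] at h
      obtain ⟨i, hi⟩ := h
      exact .inr ⟨i, hi.lt_of_ne (mul_ne_zero (boolSign_ne_zero _) (hy i))⟩
  exact isPreconnected_connectedComponentIn.subset_left_of_subset_union isOpen_cell hD hdisj
    ((connectedComponentIn_subset _ _).trans hcover)
    ⟨x, mem_connectedComponentIn (cell_subset_setOf_ne_zero hx), hx⟩

lemma cell_nonempty_and_not_isBounded [Nonempty ι] [Finite ι] {v : E}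
    (h : HasSignPattern (fun i => (f i).linear) ε v) :
    (cell f ε).Nonempty ∧ ¬ Bornology.IsBounded (cell f ε) := by
  have hray : ∀ᶠ t : ℝ in atTop, t • v ∈ cell f ε := by
    simp only [cell, Set.mem_ofPred_eq]
    refine eventually_all.2 fun i => ?_
    have hlim : Tendsto (fun t : ℝ => t * (boolSign (ε i) * (f i).linear v) +
        boolSign (ε i) * f i 0) atTop atTop :=
      tendsto_atTop_add_const_right _ _ (tendsto_id.atTop_mul_const (h i))
    filter_upwards [hlim.eventually_gt_atTop 0] with t ht
    rw [congrFun (f i).decomp, Pi.add_apply, map_smul, smul_eq_mul]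
    linarith
  have hcobounded : Tendsto (fun t : ℝ => t • v) atTop (Bornology.cobounded E) := by
    refine tendsto_norm_atTop_iff_cobounded.1 ?_
    simpa [norm_smul] using
      (tendsto_norm_atTop_atTop.comp tendsto_id).atTop_mul_const (norm_pos_iff.2 h.ne_zero)
  obtain ⟨t₀, ht₀⟩ := hray.exists
  refine ⟨⟨_, ht₀⟩, fun hb => ?_⟩
  have hout : ∀ᶠ t : ℝ in atTop, t • v ∈ (cell f ε)ᶜ := hcobounded.eventually hb
  obtain ⟨t, ht, ht'⟩ := (hray.and hout).exists
  exact ht' ht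

lemma exists_tendsto_inv_norm_smul_of_not_isBounded [FiniteDimensional ℝ E] {s : Set E}
    (hs : ¬ Bornology.IsBounded s) :
    ∃ (x : ℕ → E) (v : E), (∀ k, x k ∈ s) ∧ Tendsto (‖x ·‖) atTop atTop ∧ v ≠ 0 ∧
      Tendsto (fun k => ‖x k‖⁻¹ • x k) atTop (𝓝 v) := by
  have (k : ℕ) : ∃ y ∈ s, (k : ℝ) < ‖y‖ := by
    by_contra! h
    exact hs (isBounded_iff_forall_norm_le.2 ⟨k, h⟩)
  choose y hys hyk using this
  have hpos (k : ℕ) : 0 < ‖y k‖ := (Nat.cast_nonneg k).trans_lt (hyk k)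
  obtain ⟨v, hv, φ, hφ, hlim⟩ := (isCompact_sphere (0 : E) 1).tendsto_subseq
    (x := fun k => ‖y k‖⁻¹ • y k) fun k => by simp [norm_smul, (hpos k).ne']
  refine ⟨y ∘ φ, v, fun k => hys _, tendsto_atTop_mono (fun k => ?_) tendsto_natCast_atTop_atTop,
    by rintro rfl; simp at hv, hlim⟩
  exact (Nat.cast_le.2 (hφ.id_le k)).trans (hyk _).le

lemma exists_nonneg_of_not_isBounded_cell [FiniteDimensional ℝ E]
    (hf : ¬ Bornology.IsBounded (cell f ε)) :
    ∃ v ≠ 0, ∀ i, 0 ≤ boolSign (ε i) * (f i).linear v := by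
  obtain ⟨x, v, hx, hnorm, hv, hlim⟩ := exists_tendsto_inv_norm_smul_of_not_isBounded hf
  refine ⟨v, hv, fun i => ?_⟩
  have hconv : Tendsto (fun k => boolSign (ε i) * (f i).linear (‖x k‖⁻¹ • x k) +
      ‖x k‖⁻¹ * (boolSign (ε i) * f i 0)) atTop
      (𝓝 (boolSign (ε i) * (f i).linear v + 0 * (boolSign (ε i) * f i 0))) :=
    ((((f i).linear.continuous_of_finiteDimensional.tendsto v).comp hlim).const_mul _).add
      (hnorm.inv_tendsto_atTop.mul_const _)
  rw [zero_mul, add_zero] at hconv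
  refine ge_of_tendsto hconv ((hnorm.eventually_gt_atTop 0).mono fun k hk => ?_)
  have hk' : boolSign (ε i) * (f i).linear (‖x k‖⁻¹ • x k) + ‖x k‖⁻¹ * (boolSign (ε i) * f i 0) =
      ‖x k‖⁻¹ * (boolSign (ε i) * f i (x k)) := by
    rw [map_smul, congrFun (f i).decomp (x k), Pi.add_apply, smul_eq_mul]
    ring
  exact hk'.symm ▸ (mul_pos (inv_pos.2 hk) (hx k i)).le

lemma injOn_cell [Nonempty ι] [Finite ι] :
    Set.InjOn (cell f) (signPatterns fun i => (f i).linear) := by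
  rintro ε ⟨v, hv⟩ ε' - h
  obtain ⟨⟨x, hx⟩, -⟩ := cell_nonempty_and_not_isBounded hv
  exact eq_of_mem_cell hx (h ▸ hx)

theorem setOf_unbounded_connectedComponentIn_eq_image [Nonempty ι] [Finite ι]
    [FiniteDimensional ℝ E] (hlin : ∀ i, (f i).linear ≠ 0)
    (hind : Pairwise (Disjoint on fun i => LinearMap.ker (f i).linear)) :
    {T | (∃ x ∈ {x | ∀ i, f i x ≠ 0}, T = connectedComponentIn {x | ∀ i, f i x ≠ 0} x) ∧
      ¬ Bornology.IsBounded T} = cell f '' signPatterns fun i => (f i).linear := by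
  ext T
  constructor
  · rintro ⟨⟨x, hx, rfl⟩, hT⟩
    rw [connectedComponentIn_eq_cell (mem_cell_decide hx)] at hT ⊢
    obtain ⟨v, hv, hnonneg⟩ := exists_nonneg_of_not_isBounded_cell hT
    exact ⟨_, mem_signPatterns_of_nonneg hlin hind hv hnonneg, rfl⟩
  · rintro ⟨ε, ⟨v, hv⟩, rfl⟩
    obtain ⟨⟨x, hx⟩, hT⟩ := cell_nonempty_and_not_isBounded hv
    exact ⟨⟨x, cell_subset_setOf_ne_zero hx, (connectedComponentIn_eq_cell hx).symm⟩, hT⟩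

end Cell

theorem stmt11_general (n : ℕ) (hn : 1 ≤ n) (f : Fin n → ((Fin 2 → ℝ) →ᵃ[ℝ] ℝ))
    (hlin : ∀ i, (f i).linear ≠ 0)
    (L : Fin n → Set (Fin 2 → ℝ)) (hL : ∀ i, L i = (f i) ⁻¹' {0})
    (hpair : ∀ i j, i ≠ j → ∃ p, L i ∩ L j = {p})
    (S : Set (Fin 2 → ℝ)) (hS : S = (⋃ i, L i)ᶜ) :
    {T | (∃ x ∈ S, T = connectedComponentIn S x) ∧ ¬ Bornology.IsBounded T}.Finite ∧
    {T | (∃ x ∈ S, T = connectedComponentIn S x) ∧ ¬ Bornology.IsBounded T}.ncard = 2 * n := by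
  have : Nonempty (Fin n) := ⟨⟨0, hn⟩⟩
  have hind : Pairwise (Disjoint on fun i => LinearMap.ker (f i).linear) := fun i j hij => by
    obtain ⟨p, hp⟩ := hpair i j hij
    exact disjoint_ker_linear_of_inter_eq_singleton (p := p) (by rwa [hL, hL] at hp)
  have hS' : S = {x | ∀ i, f i x ≠ 0} := by
    ext x
    simp [hS, hL]
  rw [hS', setOf_unbounded_connectedComponentIn_eq_image hlin hind, injOn_cell.ncard_image,
    ncard_signPatterns_of_finrank_eq_two (finrank_fin_fun ℝ) hn _ hlin hind]
  exact ⟨(Set.toFinite _).image _, rfl⟩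

/-- The complement of `n` lines in general position in `ℝ²` has exactly
`2n` unbounded connected components. -/
theorem stmt11 (n : ℕ) (hn : 1 ≤ n) (f : Fin n → ((Fin 2 → ℝ) →ᵃ[ℝ] ℝ))
    (hlin : ∀ i, (f i).linear ≠ 0)
    (L : Fin n → Set (Fin 2 → ℝ)) (hL : ∀ i, L i = (f i) ⁻¹' {0})
    (hpair : ∀ i j, i ≠ j → ∃ p, L i ∩ L j = {p})
    (htriple : ∀ i j k, i ≠ j → i ≠ k → j ≠ k → L i ∩ L j ∩ L k = ∅)
    (S : Set (Fin 2 → ℝ)) (hS : S = (⋃ i, L i)ᶜ) :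
    {T | (∃ x ∈ S, T = connectedComponentIn S x) ∧ ¬ Bornology.IsBounded T}.Finite ∧
    {T | (∃ x ∈ S, T = connectedComponentIn S x) ∧ ¬ Bornology.IsBounded T}.ncard = 2 * n :=
  stmt11_general n hn f hlin L hL hpair S hS
end
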